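/- arXiv:2402.17284 — 2 statements merged into one kernel-verified Lean document; each statement's English description precedes it below -/
import Mathlib

section
/- Let Q be a quantale and γ ∈ Q with γ ≠ ⊤. Assume (a) γ * α ⊔ α * γ ≤ α for all α ∈ Q; (b) for all α ∈ Q and all β ∈ Q with β ≰ γ one has ⊤ * α ≤ (β * α) ⊔ α and α * ⊤ ≤ (α * β) ⊔ α; and (c) there exist α, β ∈ Q with γ ⊓ (α ⊔ β) ≰ (γ ⊓ α) ⊔ (γ ⊓ β). Then there exist a unital quantale M with unit e and an injective multiplicative map ι : Q → M preserving arbitrary suprema and nonempty infima, with every element of M in range ι ∪ {e, ⊤_M}, e, ⊤_M ∉ range ι, {m | m ≤ e} \ {e} = {m | m ≤ ι γ} and {m | e ≤ m} \ {e} = {⊤_M}, such that M is unitally nondistributive: e ≤ sSup {m ∈ M | m ◁ e} and there exists A ⊆ M with e ⊓ sSup A ≰ ⨆ m ∈ A, (e ⊓ m). -/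
/-!
Adjoin to `Q` a new unit `e` and a new top `⊤`: `e` lies strictly above exactly the elements
`≤ γ` and strictly below only `⊤`, and `⊤` acts on `Q` by `a ↦ a ⊔ ⊤ * a` on the left and by
`a ↦ a ⊔ a * ⊤` on the right. A join in the extension is either attained, or equal to
`e ⊔ a = ⊤` with `a ≰ γ`, or computed in `Q`. Hence multiplication distributes over joins once
it is monotone, which is where (a) enters, and satisfies `⊤ * x ≤ e * x ⊔ a * x` for `a ≰ γ`,
which is (b). The same trichotomy shows that `e` is totally below itself, while
`e ⊓ a = γ ⊓ a` carries the failure (c) of distributivity at `γ` over to `e`.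
-/

universe u

def TotallyBelow {α : Type*} [CompleteLattice α] (b a : α) : Prop :=
  ∀ A : Set α, a ≤ sSup A → ∃ c ∈ A, b ≤ c

inductive WithUnitTop (Q : Type u) (γ : Q) : Type u
  | emb : Q → WithUnitTop Q γ
  | unit : WithUnitTop Q γ
  | top : WithUnitTop Q γ

namespace WithUnitTop

variable {Q : Type u} {γ : Q} {a b : Q}

section PartialOrder

variable [PartialOrder Q]

protected def Le : WithUnitTop Q γ → WithUnitTop Q γ → Prop
  | _, top => True
  | top, _ => False
  | unit, unit => True
  | unit, emb _ => False
  | emb a, unit => a ≤ γ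
  | emb a, emb b => a ≤ b

instance : PartialOrder (WithUnitTop Q γ) where
  le := WithUnitTop.Le
  le_refl x := by cases x <;> simp [WithUnitTop.Le]
  le_trans x y z := by
    cases x <;> cases y <;> cases z <;> simp only [WithUnitTop.Le] <;>
      first | tauto | exact le_trans
  le_antisymm x y := by
    cases x <;> cases y <;> simp only [WithUnitTop.Le] <;>
      first | tauto | exact fun h h' => congrArg emb (le_antisymm h h')

@[simp] theorem emb_le_emb : (emb a : WithUnitTop Q γ) ≤ emb b ↔ a ≤ b := Iff.rfl
@[simp] theorem emb_le_unit : (emb a : WithUnitTop Q γ) ≤ unit ↔ a ≤ γ := Iff.rfl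
@[simp] theorem not_unit_le_emb : ¬ (unit : WithUnitTop Q γ) ≤ emb a := id
@[simp] theorem not_top_le_emb : ¬ (top : WithUnitTop Q γ) ≤ emb a := id
@[simp] theorem not_top_le_unit : ¬ (top : WithUnitTop Q γ) ≤ unit := id
@[simp] theorem le_top' (x : WithUnitTop Q γ) : x ≤ top := by cases x <;> trivial

theorem Iio_unit : Set.Iio (unit : WithUnitTop Q γ) = Set.Iic (emb γ) := by
  ext x; cases x <;> simp [lt_iff_le_not_ge]

end PartialOrder

section CompleteLattice

variable [CompleteLattice Q]

open Classical in
noncomputable instance : SupSet (WithUnitTop Q γ) where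
  sSup S :=
    if top ∈ S ∨ (unit ∈ S ∧ ∃ a, emb a ∈ S ∧ ¬ a ≤ γ) then top
    else if unit ∈ S then unit
    else emb (sSup {a | emb a ∈ S})

protected theorem isLUB_sSup (S : Set (WithUnitTop Q γ)) : IsLUB S (sSup S) := by
  classical
  change IsLUB S (if _ then _ else _)
  split_ifs with hTop hUnit
  · refine ⟨fun x _ => le_top' x, fun x hx => ?_⟩
    rcases hTop with h | ⟨hu, a, ha, haγ⟩
    · exact hx h
    · cases x with
      | emb b => exact absurd (hx hu) not_unit_le_emb
      | unit => exact absurd (hx ha) haγ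
      | top => exact le_rfl
  · push Not at hTop
    refine ⟨fun x hx => ?_, fun x hx => hx hUnit⟩
    cases x with
    | emb b => exact hTop.2 hUnit b hx
    | unit => exact le_rfl
    | top => exact absurd hx hTop.1
  · refine ⟨fun x hx => ?_, fun x hx => ?_⟩
    · cases x with
      | emb b => exact le_sSup hx
      | unit => exact absurd hx hUnit
      | top => exact absurd (Or.inl hx) hTop
    · cases x with
      | emb b => exact sSup_le fun a ha => hx ha
      | unit => exact sSup_le fun a ha => hx ha
      | top => exact le_top' _

noncomputable instance : CompleteLattice (WithUnitTop Q γ) :=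
  completeLatticeOfSup _ WithUnitTop.isLUB_sSup

@[simp] theorem top_eq : (⊤ : WithUnitTop Q γ) = top :=
  (top_unique (le_top' (⊤ : WithUnitTop Q γ))).symm

theorem Ioi_unit : Set.Ioi (unit : WithUnitTop Q γ) = {⊤} := by
  rw [top_eq]; ext x; cases x <;> simp [lt_iff_le_not_ge]

theorem sSup_image_emb (A : Set Q) : sSup (emb '' A : Set (WithUnitTop Q γ)) = emb (sSup A) := by
  classical
  change (if _ then _ else _) = _
  rw [if_neg (by simp), if_neg (by simp)]
  simp [emb.injEq]

theorem emb_sSup (A : Set Q) : (emb (sSup A) : WithUnitTop Q γ) = ⨆ a ∈ A, emb a := by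
  rw [← sSup_image, sSup_image_emb]

theorem emb_biSup {ι : Type*} (s : Set ι) (f : ι → Q) :
    (emb (⨆ i ∈ s, f i) : WithUnitTop Q γ) = ⨆ i ∈ s, emb (f i) := by
  rw [← sSup_image, emb_sSup, iSup_image]

theorem emb_sup (a b : Q) : (emb (a ⊔ b) : WithUnitTop Q γ) = emb a ⊔ emb b := by
  rw [← sSup_pair, emb_sSup, iSup_pair]

theorem emb_sInf {A : Set Q} (hA : A.Nonempty) :
    (emb (sInf A) : WithUnitTop Q γ) = ⨅ a ∈ A, emb a := by
  refine le_antisymm (le_iInf₂ fun a ha => emb_le_emb.2 (sInf_le ha)) ?_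
  obtain ⟨a₀, ha₀⟩ := hA
  have hle : ∀ a ∈ A, ⨅ a ∈ A, (emb a : WithUnitTop Q γ) ≤ emb a := fun a ha => iInf₂_le a ha
  generalize ⨅ a ∈ A, (emb a : WithUnitTop Q γ) = x at hle
  cases x with
  | emb b => exact emb_le_emb.2 (le_sInf fun a ha => emb_le_emb.1 (hle a ha))
  | unit => exact absurd (hle a₀ ha₀) not_unit_le_emb
  | top => exact absurd (hle a₀ ha₀) not_top_le_emb

theorem unit_inf_emb (a : Q) : (unit : WithUnitTop Q γ) ⊓ emb a = emb (γ ⊓ a) := by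
  refine le_antisymm ?_ (le_inf (emb_le_unit.2 inf_le_left) (emb_le_emb.2 inf_le_right))
  have hu : (unit : WithUnitTop Q γ) ⊓ emb a ≤ unit := inf_le_left
  have ha : (unit : WithUnitTop Q γ) ⊓ emb a ≤ emb a := inf_le_right
  generalize (unit : WithUnitTop Q γ) ⊓ emb a = x at hu ha
  cases x with
  | emb b => exact emb_le_emb.2 (le_inf hu ha)
  | unit => exact absurd ha not_unit_le_emb
  | top => exact absurd ha not_top_le_emb

theorem unit_sup_emb_of_not_le (h : ¬ a ≤ γ) : (unit : WithUnitTop Q γ) ⊔ emb a = top := by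
  have hu : (unit : WithUnitTop Q γ) ≤ unit ⊔ emb a := le_sup_left
  have ha : (emb a : WithUnitTop Q γ) ≤ unit ⊔ emb a := le_sup_right
  generalize (unit : WithUnitTop Q γ) ⊔ emb a = x at hu ha
  cases x with
  | emb b => exact absurd hu not_unit_le_emb
  | unit => exact absurd (emb_le_unit.1 ha) h
  | top => rfl

theorem sSup_mem_or (S : Set (WithUnitTop Q γ)) :
    sSup S ∈ S ∨ (unit ∈ S ∧ ∃ a, emb a ∈ S ∧ ¬ a ≤ γ) ∨ ∃ A : Set Q, S = emb '' A := by
  classical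
  change (if _ then _ else _) ∈ S ∨ _
  split_ifs with hTop hUnit
  · exact hTop.imp id Or.inl
  · exact Or.inl hUnit
  · refine Or.inr (Or.inr ⟨{a | emb a ∈ S}, Set.ext fun x => ?_⟩)
    cases x <;> simp_all

theorem map_sSup_eq {β : Type*} [CompleteLattice β] {f : WithUnitTop Q γ → β} (hf : Monotone f)
    (htop : ∀ a, ¬ a ≤ γ → f top ≤ f unit ⊔ f (emb a))
    (hemb : ∀ A : Set Q, f (emb (sSup A)) ≤ ⨆ a ∈ A, f (emb a)) (S : Set (WithUnitTop Q γ)) :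
    f (sSup S) = ⨆ x ∈ S, f x := by
  refine le_antisymm ?_ hf.le_map_sSup
  rcases sSup_mem_or S with hS | ⟨hu, a, ha, haγ⟩ | ⟨A, rfl⟩
  · exact le_biSup f hS
  · have hS : sSup S = top := le_antisymm (le_top' _)
      ((unit_sup_emb_of_not_le haγ).symm.le.trans (sup_le (le_sSup hu) (le_sSup ha)))
    rw [hS]
    exact (htop a haγ).trans (sup_le (le_biSup f hu) (le_biSup f ha))
  · rw [sSup_image_emb, iSup_image]
    exact hemb A

theorem totallyBelow_unit_unit : TotallyBelow (unit : WithUnitTop Q γ) unit := by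
  intro A hA
  rcases sSup_mem_or A with hS | ⟨hu, -⟩ | ⟨B, rfl⟩
  · exact ⟨_, hS, hA⟩
  · exact ⟨unit, hu, le_rfl⟩
  · rw [sSup_image_emb] at hA
    exact absurd hA not_unit_le_emb

theorem not_unit_inf_sup_le (h : ¬ γ ⊓ (a ⊔ b) ≤ γ ⊓ a ⊔ γ ⊓ b) :
    ¬ (unit : WithUnitTop Q γ) ⊓ (emb a ⊔ emb b) ≤ unit ⊓ emb a ⊔ unit ⊓ emb b := by
  rwa [← emb_sup, unit_inf_emb, unit_inf_emb, unit_inf_emb, ← emb_sup, emb_le_emb]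

end CompleteLattice

section Mul

variable [Mul Q] [Max Q] [Top Q]

instance : Mul (WithUnitTop Q γ) where
  mul
    | unit, y => y
    | emb a, unit => emb a
    | top, unit => top
    | top, top => top
    | top, emb b => emb (b ⊔ ⊤ * b)
    | emb a, top => emb (a ⊔ a * ⊤)
    | emb a, emb b => emb (a * b)

@[simp] theorem unit_mul (x : WithUnitTop Q γ) : unit * x = x := rfl
@[simp] theorem mul_unit (x : WithUnitTop Q γ) : x * unit = x := by cases x <;> rfl
@[simp] theorem top_mul_top : (top : WithUnitTop Q γ) * top = top := rfl
@[simp] theorem top_mul_emb : (top : WithUnitTop Q γ) * emb b = emb (b ⊔ ⊤ * b) := rfl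
@[simp] theorem emb_mul_top : (emb a : WithUnitTop Q γ) * top = emb (a ⊔ a * ⊤) := rfl
@[simp] theorem emb_mul_emb : (emb a : WithUnitTop Q γ) * emb b = emb (a * b) := rfl

end Mul

section MulCompleteLattice

variable [Mul Q] [CompleteLattice Q]

theorem top_mul_le (h : ∀ a b : Q, ¬ b ≤ γ → ⊤ * a ≤ b * a ⊔ a) (z : WithUnitTop Q γ)
    (hb : ¬ b ≤ γ) : top * z ≤ unit * z ⊔ emb b * z := by
  rcases z with c | _ | _
  · rw [unit_mul, top_mul_emb, emb_mul_emb, ← emb_sup, emb_le_emb]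
    exact sup_le le_sup_left ((h c b hb).trans (sup_comm _ _).le)
  · simp only [mul_unit, unit_sup_emb_of_not_le hb, le_refl]
  · exact le_sup_left

theorem mul_top_le (h : ∀ a b : Q, ¬ b ≤ γ → a * ⊤ ≤ a * b ⊔ a) (z : WithUnitTop Q γ)
    (hb : ¬ b ≤ γ) : z * top ≤ z * unit ⊔ z * emb b := by
  rcases z with c | _ | _
  · rw [mul_unit, emb_mul_top, emb_mul_emb, ← emb_sup, emb_le_emb]
    exact sup_le le_sup_left ((h c b hb).trans (sup_comm _ _).le)
  · rw [unit_mul, unit_mul, unit_mul, unit_sup_emb_of_not_le hb]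
  · exact le_sup_left

end MulCompleteLattice

section Quantale

open Quantale

variable [Semigroup Q] [CompleteLattice Q] [IsQuantale Q]

instance : Semigroup (WithUnitTop Q γ) where
  mul_assoc x y z := by
    rcases x with a | _ | _ <;> rcases y with b | _ | _ <;> rcases z with c | _ | _ <;>
      simp only [unit_mul, mul_unit, top_mul_top, top_mul_emb, emb_mul_top, emb_mul_emb,
        emb.injEq, mul_sup_distrib, sup_mul_distrib, mul_assoc]
    · exact sup_eq_left.2 (sup_le le_sup_right ((mul_le_mul_right le_top a).trans le_sup_right))
    · ac_rfl
    · refine (sup_eq_left.2 (sup_le le_sup_right ?_)).symm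
      rw [← mul_assoc]
      exact (mul_le_mul_left le_top c).trans le_sup_right

theorem monotone_mul_const (hγ : ∀ a : Q, γ * a ≤ a) (z : WithUnitTop Q γ) :
    Monotone (· * z) := by
  intro x y hxy
  rcases x with a | _ | _ <;> rcases y with b | _ | _ <;> rcases z with c | _ | _ <;>
    simp_all only [emb_le_emb, emb_le_unit, not_unit_le_emb, not_top_le_emb, not_top_le_unit,
      le_top', le_refl, unit_mul, mul_unit, emb_mul_emb, top_mul_emb, emb_mul_top, top_mul_top,
      le_sup_left, sup_le_iff]
  · exact mul_le_mul_left hxy c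
  · exact ⟨le_sup_of_le_left hxy, le_sup_of_le_right (mul_le_mul_left hxy ⊤)⟩
  · exact (mul_le_mul_left hxy c).trans (hγ c)
  · exact le_sup_of_le_right (mul_le_mul_left le_top c)

theorem monotone_const_mul (hγ : ∀ a : Q, a * γ ≤ a) (z : WithUnitTop Q γ) :
    Monotone (z * ·) := by
  intro x y hxy
  rcases x with a | _ | _ <;> rcases y with b | _ | _ <;> rcases z with c | _ | _ <;>
    simp_all only [emb_le_emb, emb_le_unit, not_unit_le_emb, not_top_le_emb, not_top_le_unit,
      le_top', le_refl, unit_mul, mul_unit, emb_mul_emb, top_mul_emb, emb_mul_top, top_mul_top,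
      le_sup_left, sup_le_iff]
  · exact mul_le_mul_right hxy c
  · exact ⟨le_sup_of_le_left hxy, le_sup_of_le_right (mul_le_mul_right hxy ⊤)⟩
  · exact (mul_le_mul_right hxy c).trans (hγ c)
  · exact le_sup_of_le_right (mul_le_mul_right le_top c)

theorem emb_sSup_mul_le (A : Set Q) (z : WithUnitTop Q γ) :
    emb (sSup A) * z ≤ ⨆ a ∈ A, emb a * z := by
  rcases z with c | _ | _
  · simp only [emb_mul_emb, sSup_mul_distrib, emb_biSup, le_rfl]
  · simp only [mul_unit, emb_sSup, le_rfl]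
  · simp only [emb_mul_top, ← emb_biSup, emb_le_emb, sSup_mul_distrib]
    exact sup_le (sSup_le fun a ha => le_iSup₂_of_le a ha le_sup_left)
      (iSup₂_le fun a ha => le_iSup₂_of_le a ha le_sup_right)

theorem mul_emb_sSup_le (A : Set Q) (z : WithUnitTop Q γ) :
    z * emb (sSup A) ≤ ⨆ a ∈ A, z * emb a := by
  rcases z with c | _ | _
  · simp only [emb_mul_emb, mul_sSup_distrib, emb_biSup, le_rfl]
  · simp only [unit_mul, emb_sSup, le_rfl]
  · simp only [top_mul_emb, ← emb_biSup, emb_le_emb, mul_sSup_distrib]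
    exact sup_le (sSup_le fun a ha => le_iSup₂_of_le a ha le_sup_left)
      (iSup₂_le fun a ha => le_iSup₂_of_le a ha le_sup_right)

theorem isQuantale (hγl : ∀ a : Q, γ * a ≤ a) (hγr : ∀ a : Q, a * γ ≤ a)
    (htl : ∀ a b : Q, ¬ b ≤ γ → ⊤ * a ≤ b * a ⊔ a)
    (htr : ∀ a b : Q, ¬ b ≤ γ → a * ⊤ ≤ a * b ⊔ a) :
    IsQuantale (WithUnitTop Q γ) where
  mul_sSup_distrib z S :=
    map_sSup_eq (monotone_const_mul hγr z) (fun _ => mul_top_le htr z) (mul_emb_sSup_le · z) S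
  sSup_mul_distrib S z :=
    map_sSup_eq (monotone_mul_const hγl z) (fun _ => top_mul_le htl z) (emb_sSup_mul_le · z) S

end Quantale

end WithUnitTop

open WithUnitTop in
theorem stmt_11_general {Q : Type u} [CompleteLattice Q] (mul : Q → Q → Q)
    (hassoc : ∀ a b c : Q, mul (mul a b) c = mul a (mul b c))
    (hsSup_left : ∀ (A : Set Q) (b : Q), mul (sSup A) b = ⨆ a ∈ A, mul a b)
    (hsSup_right : ∀ (A : Set Q) (b : Q), mul b (sSup A) = ⨆ a ∈ A, mul b a)
    (γ : Q)
    (ha : ∀ α : Q, mul γ α ⊔ mul α γ ≤ α)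
    (hb : ∀ α β : Q, ¬ β ≤ γ →
      mul ⊤ α ≤ mul β α ⊔ α ∧ mul α ⊤ ≤ mul α β ⊔ α)
    (hc : ∃ α β : Q, ¬ γ ⊓ (α ⊔ β) ≤ (γ ⊓ α) ⊔ (γ ⊓ β)) :
    ∃ (M : Type u) (_ : CompleteLattice M) (mulM : M → M → M) (e : M) (ι : Q → M),
      (∀ a b c : M, mulM (mulM a b) c = mulM a (mulM b c)) ∧
      (∀ (A : Set M) (b : M), mulM (sSup A) b = ⨆ a ∈ A, mulM a b) ∧
      (∀ (A : Set M) (b : M), mulM b (sSup A) = ⨆ a ∈ A, mulM b a) ∧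
      (∀ m : M, mulM e m = m ∧ mulM m e = m) ∧
      Function.Injective ι ∧
      (∀ p q : Q, ι (mul p q) = mulM (ι p) (ι q)) ∧
      (∀ A : Set Q, ι (sSup A) = ⨆ a ∈ A, ι a) ∧
      (∀ A : Set Q, A.Nonempty → ι (sInf A) = ⨅ a ∈ A, ι a) ∧
      (∀ m : M, m ∈ Set.range ι ∨ m = e ∨ m = ⊤) ∧
      e ∉ Set.range ι ∧ (⊤ : M) ∉ Set.range ι ∧
      ({m : M | m ≤ e} \ {e} = {m : M | m ≤ ι γ}) ∧
      ({m : M | e ≤ m} \ {e} = {(⊤ : M)}) ∧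
      e ≤ sSup {m : M | ∀ A : Set M, e ≤ sSup A → ∃ c ∈ A, m ≤ c} ∧
      (∃ A : Set M, ¬ e ⊓ sSup A ≤ ⨆ m ∈ A, e ⊓ m) := by
  let : Semigroup Q := { mul, mul_assoc := hassoc }
  have : IsQuantale Q := ⟨fun b A => hsSup_right A b, hsSup_left⟩
  have := isQuantale (γ := γ) (fun a => le_sup_left.trans (ha a))
    (fun a => le_sup_right.trans (ha a)) (fun a b h => (hb a b h).1) (fun a b h => (hb a b h).2)
  obtain ⟨α, β, hαβ⟩ := hc
  refine ⟨WithUnitTop Q γ, inferInstance, (· * ·), unit, emb, mul_assoc,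
    fun A b => sSup_mul_distrib, fun A b => mul_sSup_distrib, fun m => ⟨unit_mul m, mul_unit m⟩,
    fun _ _ => emb.inj, fun _ _ => rfl, emb_sSup, fun _ => emb_sInf, ?_, ?_, ?_,
    Set.Iic_sdiff_right.trans Iio_unit, Set.Ici_sdiff_left.trans Ioi_unit,
    le_sSup totallyBelow_unit_unit, ⟨{emb α, emb β}, ?_⟩⟩
  · rintro (a | _ | _)
    exacts [Or.inl ⟨a, rfl⟩, Or.inr (Or.inl rfl), Or.inr (Or.inr top_eq.symm)]
  · rintro ⟨a, ⟨⟩⟩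
  · rw [top_eq]
    rintro ⟨a, ⟨⟩⟩
  · rw [sSup_pair, iSup_pair]
    exact not_unit_inf_sup_le hαβ

/-- A quantale `Q` with `γ ≠ ⊤` satisfying conditions (a), (b) and the
nondistributivity condition (c) extends (by an isolated unit `e` with `e⁻ = ι γ`,
`e⁺ = ⊤`) to a unitally nondistributive unital quantale `M`: the unit `e` is
◁-approximable and does not meet-distribute over arbitrary joins. -/
theorem stmt_11 {Q : Type u} [CompleteLattice Q] (mul : Q → Q → Q)
    (hassoc : ∀ a b c : Q, mul (mul a b) c = mul a (mul b c))
    (hsSup_left : ∀ (A : Set Q) (b : Q), mul (sSup A) b = ⨆ a ∈ A, mul a b)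
    (hsSup_right : ∀ (A : Set Q) (b : Q), mul b (sSup A) = ⨆ a ∈ A, mul b a)
    (γ : Q) (hγ : γ ≠ ⊤)
    (ha : ∀ α : Q, mul γ α ⊔ mul α γ ≤ α)
    (hb : ∀ α β : Q, ¬ β ≤ γ →
      mul ⊤ α ≤ mul β α ⊔ α ∧ mul α ⊤ ≤ mul α β ⊔ α)
    (hc : ∃ α β : Q, ¬ γ ⊓ (α ⊔ β) ≤ (γ ⊓ α) ⊔ (γ ⊓ β)) :
    ∃ (M : Type u) (_ : CompleteLattice M) (mulM : M → M → M) (e : M) (ι : Q → M),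
      (∀ a b c : M, mulM (mulM a b) c = mulM a (mulM b c)) ∧
      (∀ (A : Set M) (b : M), mulM (sSup A) b = ⨆ a ∈ A, mulM a b) ∧
      (∀ (A : Set M) (b : M), mulM b (sSup A) = ⨆ a ∈ A, mulM b a) ∧
      (∀ m : M, mulM e m = m ∧ mulM m e = m) ∧
      Function.Injective ι ∧
      (∀ p q : Q, ι (mul p q) = mulM (ι p) (ι q)) ∧
      (∀ A : Set Q, ι (sSup A) = ⨆ a ∈ A, ι a) ∧
      (∀ A : Set Q, A.Nonempty → ι (sInf A) = ⨅ a ∈ A, ι a) ∧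
      (∀ m : M, m ∈ Set.range ι ∨ m = e ∨ m = ⊤) ∧
      e ∉ Set.range ι ∧ (⊤ : M) ∉ Set.range ι ∧
      ({m : M | m ≤ e} \ {e} = {m : M | m ≤ ι γ}) ∧
      ({m : M | e ≤ m} \ {e} = {(⊤ : M)}) ∧
      e ≤ sSup {m : M | ∀ A : Set M, e ≤ sSup A → ∃ c ∈ A, m ≤ c} ∧
      (∃ A : Set M, ¬ e ⊓ sSup A ≤ ⨆ m ∈ A, e ⊓ m) :=
  stmt_11_general mul hassoc hsSup_left hsSup_right γ ha hb hc
end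

section
/- Let Q be a quantale with exactly seven pairwise distinct elements ⊥, α, β, γ, α ⊔ γ, β ⊔ γ, ⊤ (every element of Q is one of these), where α, β, γ are pairwise incomparable atoms, α ⊔ β = ⊤, α ⊔ γ ≠ ⊤, β ⊔ γ ≠ ⊤, and (α ⊔ γ) ⊓ (β ⊔ γ) = γ (the lattice L7). Assume (a) γ * a ⊔ a * γ ≤ a for all a ∈ Q, and (b) for all a ∈ Q and all b ∈ Q with b ≰ γ one has ⊤ * a ≤ (b * a) ⊔ a and a * ⊤ ≤ (a * b) ⊔ a. Then ⊤ * γ = ⊥ and γ * ⊤ = ⊥. -/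
/-!
Condition (b) with `b = α` and `b = β`, combined with (a), puts `⊤ * γ` below both `α ⊔ γ` and
`β ⊔ γ`, hence below their meet `γ`. Splitting `⊤ = α ⊔ β`, each of `α * γ` and `β * γ` then lies
below `γ` and, by (a), below an atom disjoint from `γ`, so both vanish. The claim for `γ * ⊤`
is the same argument for the opposite multiplication.
-/

section

variable {Q : Type*} [CompleteLattice Q] (mul : Q → Q → Q)

theorem sup_mul_of_sSup_mul
    (hsSup : ∀ (A : Set Q) (b : Q), mul (sSup A) b = ⨆ a ∈ A, mul a b) (a b c : Q) :
    mul (a ⊔ b) c = mul a c ⊔ mul b c := by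
  rw [← sSup_pair, hsSup, iSup_pair]

variable {mul}

theorem top_mul_eq_bot_of_le_sup {α β γ : Q}
    (hsup_mul : ∀ a b c : Q, mul (a ⊔ b) c = mul a c ⊔ mul b c)
    (hαβ : α ⊔ β = ⊤) (hαγ : Disjoint α γ) (hβγ : Disjoint β γ)
    (hmeet : (α ⊔ γ) ⊓ (β ⊔ γ) = γ)
    (hα : mul α γ ≤ α) (hβ : mul β γ ≤ β)
    (htopα : mul ⊤ γ ≤ mul α γ ⊔ γ) (htopβ : mul ⊤ γ ≤ mul β γ ⊔ γ) :
    mul ⊤ γ = ⊥ := by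
  have htop_le : mul ⊤ γ ≤ γ :=
    (le_inf (htopα.trans (sup_le_sup_right hα γ))
      (htopβ.trans (sup_le_sup_right hβ γ))).trans hmeet.le
  have hsplit : mul ⊤ γ = mul α γ ⊔ mul β γ := by rw [← hαβ, hsup_mul]
  have hαγ_bot : mul α γ = ⊥ :=
    le_bot_iff.mp (hαγ hα ((hsplit ▸ le_sup_left).trans htop_le))
  have hβγ_bot : mul β γ = ⊥ :=
    le_bot_iff.mp (hβγ hβ ((hsplit ▸ le_sup_right).trans htop_le))
  rw [hsplit, hαγ_bot, hβγ_bot, sup_idem]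

end

theorem stmt_19_general {Q : Type*} [CompleteLattice Q] (mul : Q → Q → Q)
    (hsSup_left : ∀ (A : Set Q) (b : Q), mul (sSup A) b = ⨆ a ∈ A, mul a b)
    (hsSup_right : ∀ (A : Set Q) (b : Q), mul b (sSup A) = ⨆ a ∈ A, mul b a)
    (α β γ : Q)
    (hα : IsAtom α) (hβ : IsAtom β)
    (hαγ : ¬ α ≤ γ ∧ ¬ γ ≤ α) (hβγ : ¬ β ≤ γ ∧ ¬ γ ≤ β)
    (hjαβ : α ⊔ β = ⊤)
    (hmeet : (α ⊔ γ) ⊓ (β ⊔ γ) = γ)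
    (ha : ∀ a : Q, mul γ a ⊔ mul a γ ≤ a)
    (hb : ∀ a b : Q, ¬ b ≤ γ →
      mul ⊤ a ≤ mul b a ⊔ a ∧ mul a ⊤ ≤ mul a b ⊔ a) :
    mul ⊤ γ = ⊥ ∧ mul γ ⊤ = ⊥ := by
  have hαγ_disj : Disjoint α γ := hα.not_le_iff_disjoint.mp hαγ.1
  have hβγ_disj : Disjoint β γ := hβ.not_le_iff_disjoint.mp hβγ.1
  constructor
  · exact top_mul_eq_bot_of_le_sup (sup_mul_of_sSup_mul mul hsSup_left) hjαβ hαγ_disj hβγ_disj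
      hmeet (le_sup_right.trans (ha α)) (le_sup_right.trans (ha β))
      (hb γ α hαγ.1).1 (hb γ β hβγ.1).1
  · exact top_mul_eq_bot_of_le_sup (mul := fun a b => mul b a)
      (sup_mul_of_sSup_mul (fun a b => mul b a) hsSup_right) hjαβ hαγ_disj hβγ_disj
      hmeet (le_sup_left.trans (ha α)) (le_sup_left.trans (ha β))
      (hb γ α hαγ.1).2 (hb γ β hβγ.1).2

/-- Let `Q` be a quantale on the lattice `L7` (exactly the seven
pairwise distinct elements `⊥, α, β, γ, α ⊔ γ, β ⊔ γ, ⊤`, with pairwise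
incomparable atoms `α, β, γ`, `α ⊔ β = ⊤`, `α ⊔ γ ≠ ⊤`, `β ⊔ γ ≠ ⊤`, and
`(α ⊔ γ) ⊓ (β ⊔ γ) = γ`) satisfying conditions (a) and (b). Then
`⊤ * γ = ⊥` and `γ * ⊤ = ⊥`. -/
theorem stmt_19 {Q : Type*} [CompleteLattice Q] (mul : Q → Q → Q)
    (hassoc : ∀ a b c : Q, mul (mul a b) c = mul a (mul b c))
    (hsSup_left : ∀ (A : Set Q) (b : Q), mul (sSup A) b = ⨆ a ∈ A, mul a b)
    (hsSup_right : ∀ (A : Set Q) (b : Q), mul b (sSup A) = ⨆ a ∈ A, mul b a)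
    (α β γ : Q)
    (hdistinct : ([⊥, α, β, γ, α ⊔ γ, β ⊔ γ, ⊤] : List Q).Pairwise (· ≠ ·))
    (hcover : ∀ q : Q, q = ⊥ ∨ q = α ∨ q = β ∨ q = γ ∨ q = α ⊔ γ ∨
      q = β ⊔ γ ∨ q = ⊤)
    (hα : IsAtom α) (hβ : IsAtom β) (hγ : IsAtom γ)
    (hαβ : ¬ α ≤ β ∧ ¬ β ≤ α) (hαγ : ¬ α ≤ γ ∧ ¬ γ ≤ α) (hβγ : ¬ β ≤ γ ∧ ¬ γ ≤ β)
    (hjαβ : α ⊔ β = ⊤) (hne1 : α ⊔ γ ≠ ⊤) (hne2 : β ⊔ γ ≠ ⊤)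
    (hmeet : (α ⊔ γ) ⊓ (β ⊔ γ) = γ)
    (ha : ∀ a : Q, mul γ a ⊔ mul a γ ≤ a)
    (hb : ∀ a b : Q, ¬ b ≤ γ →
      mul ⊤ a ≤ mul b a ⊔ a ∧ mul a ⊤ ≤ mul a b ⊔ a) :
    mul ⊤ γ = ⊥ ∧ mul γ ⊤ = ⊥ :=
  stmt_19_general mul hsSup_left hsSup_right α β γ hα hβ hαγ hβγ hjαβ hmeet ha hb
end
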